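/- arXiv:2002.12691 — 5 statements merged into one kernel-verified Lean document; each statement's English description precedes it below -/
import Mathlib

section
/- The Fresnel integral ∫_{-∞}^{∞} e^{(i/2)x²} dx exists as an improper Riemann integral (equivalently, as a Henstock–Kurzweil integral) and equals √(2π/(-i)), i.e. √(2π)·e^{iπ/4}. -/
/-!
For `0 < re b` the Gaussian integral is `∫ e^{-bx²} = (π/b)^{1/2}`. Writing `e^{-bx²}` as the
derivative of `e^{-bx²}/(-2bx)` minus `e^{-bx²}/(2bx²)` shows `‖∫_a^R e^{-bx²}‖ ≤ 1/(‖b‖a)` as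
soon as `0 ≤ re b`, since then `|e^{-bx²}| ≤ 1`. Hence
`‖∫_{-a}^a e^{-bx²} - (π/b)^{1/2}‖ ≤ 2/(‖b‖a)` for `0 < re b`, and by continuity in `b` also on
the imaginary axis. At `b = -i/2` we get `π/b = 2πi`, whose principal square root is
`√(2π) e^{iπ/4}`.
-/

open MeasureTheory Filter Real Set Complex
open scoped Topology

lemma intervalIntegral.integral_neg_eq_add_two_smul_of_even {E : Type*} [NormedAddCommGroup E]
    [NormedSpace ℝ E] {f : ℝ → E} (hf : ∀ x, f (-x) = f x) (hloc : LocallyIntegrable f)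
    (a R : ℝ) :
    ∫ x in -R..R, f x = (∫ x in -a..a, f x) + (2 : ℝ) • ∫ x in a..R, f x := by
  have hi : ∀ c d : ℝ, IntervalIntegrable f volume c d := fun c d =>
    (hloc.integrableOn_isCompact isCompact_uIcc).intervalIntegrable
  have hsymm : ∫ x in -R..-a, f x = ∫ x in a..R, f x := by
    simp_rw [← intervalIntegral.integral_comp_neg, hf]
  rw [← intervalIntegral.integral_add_adjacent_intervals (hi (-R) (-a)) (hi (-a) R),
    ← intervalIntegral.integral_add_adjacent_intervals (hi (-a) a) (hi a R), hsymm, two_smul]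
  abel

lemma Complex.mem_slitPlane_of_nonneg_re {z : ℂ} (hre : 0 ≤ z.re) (hz : z ≠ 0) :
    z ∈ slitPlane := by
  rcases hre.lt_or_eq with hre | hre
  · exact .inl hre
  · exact .inr fun him => hz (Complex.ext hre.symm him)

section ComplexGaussian

variable {b : ℂ}

lemma hasDerivAt_cexp_neg_mul_sq_div (hb : b ≠ 0) {x : ℝ} (hx : x ≠ 0) :
    HasDerivAt (fun t : ℝ => cexp (-b * t ^ 2) / (-2 * b * t))
      (cexp (-b * x ^ 2) + cexp (-b * x ^ 2) / (2 * b * x ^ 2)) x := by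
  have hx' : (x : ℂ) ≠ 0 := ofReal_ne_zero.mpr hx
  have hexp : HasDerivAt (fun z : ℂ => cexp (-b * z ^ 2)) (cexp (-b * x ^ 2) * (-b * (2 * x)))
      x := ((hasDerivAt_pow 2 (x : ℂ)).const_mul (-b)).cexp.congr_deriv (by ring)
  have hlin : HasDerivAt (fun z : ℂ => -2 * b * z) (-2 * b) x := by
    simpa using (hasDerivAt_id (x : ℂ)).const_mul (-2 * b)
  exact (hexp.div hlin (by simp [hb, hx'])).comp_ofReal.congr_deriv (by field_simp; ring)

lemma integral_cexp_neg_mul_sq_eq_boundary_sub (hb : b ≠ 0) {a R : ℝ} (ha : 0 < a)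
    (hR : a ≤ R) :
    ∫ x in a..R, cexp (-b * x ^ 2) =
      cexp (-b * R ^ 2) / (-2 * b * R) - cexp (-b * a ^ 2) / (-2 * b * a)
        - ∫ x in a..R, cexp (-b * x ^ 2) / (2 * b * x ^ 2) := by
  have hpos : ∀ x ∈ uIcc a R, 0 < x := fun x hx => ha.trans_le (uIcc_of_le hR ▸ hx).1
  have hcont : ContinuousOn (fun x : ℝ => cexp (-b * x ^ 2) / (2 * b * x ^ 2)) (uIcc a R) :=
    ContinuousOn.div (by fun_prop) (by fun_prop) fun x hx => by
      simp [hb, (hpos x hx).ne']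
  rw [eq_sub_iff_add_eq, ← intervalIntegral.integral_add
    ((by fun_prop : Continuous fun x : ℝ => cexp (-b * x ^ 2)).intervalIntegrable _ _)
    hcont.intervalIntegrable]
  refine intervalIntegral.integral_eq_sub_of_hasDerivAt
    (fun x hx => hasDerivAt_cexp_neg_mul_sq_div hb (hpos x hx).ne') ?_
  exact (ContinuousOn.add (by fun_prop) hcont).intervalIntegrable

lemma norm_integral_cexp_neg_mul_sq_le (hb : 0 ≤ b.re) (hb0 : b ≠ 0) {a R : ℝ} (ha : 0 < a)
    (hR : a ≤ R) : ‖∫ x in a..R, cexp (-b * x ^ 2)‖ ≤ (‖b‖ * a)⁻¹ := by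
  have hexp : ∀ x : ℝ, ‖cexp (-b * x ^ 2)‖ ≤ 1 := fun x => by
    rw [norm_cexp_neg_mul_sq, Real.exp_le_one_iff]
    nlinarith [sq_nonneg x]
  have hboundary : ∀ x : ℝ, 0 < x → ‖cexp (-b * x ^ 2) / (-2 * b * x)‖ ≤ (2 * ‖b‖ * x)⁻¹ :=
    fun x hx => by
      rw [norm_div, div_eq_mul_inv, ← one_mul (2 * ‖b‖ * x)⁻¹]
      refine mul_le_mul (hexp x) (le_of_eq ?_) (by positivity) zero_le_one
      simp [abs_of_pos hx]
  have hrem :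
      ‖∫ x in a..R, cexp (-b * x ^ 2) / (2 * b * x ^ 2)‖ ≤ (2 * ‖b‖)⁻¹ * (a⁻¹ - R⁻¹) := by
    have h0 : (0 : ℝ) ∉ uIcc a R := fun h => (lt_irrefl 0) (ha.trans_le (uIcc_of_le hR ▸ h).1)
    have hmajorant :
        ∫ x in a..R, (2 * ‖b‖)⁻¹ * x ^ (-2 : ℤ) = (2 * ‖b‖)⁻¹ * (a⁻¹ - R⁻¹) := by
      rw [intervalIntegral.integral_const_mul, integral_zpow (Or.inr ⟨by norm_num, h0⟩)]
      congr 1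
      norm_num [div_neg]
    refine hmajorant ▸ intervalIntegral.norm_integral_le_of_norm_le hR
      (Eventually.of_forall fun x hx => ?_) ?_
    · have hx : 0 < x := ha.trans hx.1
      rw [norm_div, div_eq_mul_inv, ← one_mul ((2 * ‖b‖)⁻¹ * x ^ (-2 : ℤ))]
      refine mul_le_mul (hexp x) (le_of_eq ?_) (by positivity) zero_le_one
      simp [abs_of_pos hx, mul_comm]
    · refine (continuousOn_const.mul (continuousOn_id.zpow₀ _ fun x hx => ?_)).intervalIntegrable
      exact .inl (ne_of_mem_of_not_mem hx h0)
  rw [integral_cexp_neg_mul_sq_eq_boundary_sub hb0 ha hR]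
  calc _ ≤ (2 * ‖b‖ * R)⁻¹ + (2 * ‖b‖ * a)⁻¹ + (2 * ‖b‖)⁻¹ * (a⁻¹ - R⁻¹) := by
        refine (norm_sub_le _ _).trans (add_le_add ((norm_sub_le _ _).trans ?_) hrem)
        exact add_le_add (hboundary R (ha.trans_le hR)) (hboundary a ha)
    _ = (‖b‖ * a)⁻¹ := by field_simp; ring

lemma norm_integral_cexp_neg_mul_sq_sub_cpow_le_of_re_pos (hb : 0 < b.re) {a : ℝ}
    (ha : 0 < a) :
    ‖(∫ x in -a..a, cexp (-b * x ^ 2)) - (π / b) ^ (1 / 2 : ℂ)‖ ≤ 2 * (‖b‖ * a)⁻¹ := by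
  have hlim : Tendsto (fun R : ℝ => ∫ x in -R..R, cexp (-b * x ^ 2)) atTop
      (𝓝 ((π / b) ^ (1 / 2 : ℂ))) := by
    simpa only [integral_gaussian_complex hb, id] using intervalIntegral_tendsto_integral
      (integrable_cexp_neg_mul_sq hb) tendsto_neg_atTop_atBot tendsto_id
  refine le_of_tendsto ((tendsto_const_nhds.sub hlim).norm) ?_
  filter_upwards [eventually_ge_atTop a] with R hR
  rw [intervalIntegral.integral_neg_eq_add_two_smul_of_even (fun x => by simp)
      (by fun_prop : Continuous fun x : ℝ => cexp (-b * x ^ 2)).locallyIntegrable a R,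
    sub_add_cancel_left, norm_neg, norm_smul, Real.norm_two]
  exact mul_le_mul_of_nonneg_left (norm_integral_cexp_neg_mul_sq_le hb.le
    (fun h => by simp [h] at hb) ha hR) zero_le_two

lemma norm_integral_cexp_neg_mul_sq_sub_cpow_le (hb : 0 ≤ b.re) (hb0 : b ≠ 0) {a : ℝ}
    (ha : 0 < a) :
    ‖(∫ x in -a..a, cexp (-b * x ^ 2)) - (π / b) ^ (1 / 2 : ℂ)‖ ≤ 2 * (‖b‖ * a)⁻¹ := by
  have hslit : (π / b : ℂ) ∈ slitPlane := by
    refine mem_slitPlane_of_nonneg_re ?_ (div_ne_zero (ofReal_ne_zero.mpr pi_ne_zero) hb0)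
    rw [div_eq_mul_inv, re_ofReal_mul, inv_re]
    exact mul_nonneg pi_pos.le (div_nonneg hb (normSq_nonneg b))
  have hcont : ContinuousAt (fun c : ℂ =>
      ‖(∫ x in -a..a, cexp (-c * x ^ 2)) - (π / c) ^ (1 / 2 : ℂ)‖ - 2 * (‖c‖ * a)⁻¹) b := by
    have hint : Continuous fun c : ℂ => ∫ x in -a..a, cexp (-c * x ^ 2) :=
      intervalIntegral.continuous_parametric_intervalIntegral_of_continuous' (by fun_prop) _ _
    have hpow : ContinuousAt (fun c : ℂ => (π / c) ^ (1 / 2 : ℂ)) b :=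
      (continuousAt_cpow_const hslit).comp (continuousAt_const.div continuousAt_id hb0)
    exact ((hint.continuousAt.sub hpow).norm).sub (continuousAt_const.mul
      ((continuous_norm.continuousAt.mul continuousAt_const).inv₀
        (mul_ne_zero (norm_ne_zero_iff.mpr hb0) ha.ne')))
  have hshift : Tendsto (fun ε : ℝ => b + ε) (𝓝[>] 0) (𝓝 b) := by
    simpa using ((continuous_ofReal.tendsto 0).const_add b).mono_left nhdsWithin_le_nhds
  rw [← sub_nonpos]
  refine le_of_tendsto (hcont.tendsto.comp hshift) ?_
  filter_upwards [self_mem_nhdsWithin] with ε hε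
  have hre : 0 < (b + ε).re := by simpa using add_pos_of_nonneg_of_pos hb hε
  exact sub_nonpos.mpr (norm_integral_cexp_neg_mul_sq_sub_cpow_le_of_re_pos hre ha)

theorem tendsto_integral_cexp_neg_mul_sq (hb : 0 ≤ b.re) (hb0 : b ≠ 0) :
    Tendsto (fun a : ℝ => ∫ x in -a..a, cexp (-b * x ^ 2)) atTop
      (𝓝 ((π / b) ^ (1 / 2 : ℂ))) := by
  rw [tendsto_iff_norm_sub_tendsto_zero]
  have hbound : Tendsto (fun a : ℝ => 2 * (‖b‖ * a)⁻¹) atTop (𝓝 0) := by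
    simpa using
      ((tendsto_id.const_mul_atTop (norm_pos_iff.mpr hb0)).inv_tendsto_atTop).const_mul 2
  refine squeeze_zero' (Eventually.of_forall fun _ => norm_nonneg _) ?_ hbound
  filter_upwards [eventually_gt_atTop 0] with a ha
  exact norm_integral_cexp_neg_mul_sq_sub_cpow_le hb hb0 ha

end ComplexGaussian

lemma Complex.ofReal_mul_I_cpow_one_half {r : ℝ} (hr : 0 < r) :
    ((r : ℂ) * I) ^ (1 / 2 : ℂ) = √r * cexp (I * π / 4) := by
  have hlog : log (r * I) = Real.log r + π / 2 * I := by
    rw [log_ofReal_mul hr I_ne_zero, log_I]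
  rw [cpow_def_of_ne_zero (mul_ne_zero (ofReal_ne_zero.mpr hr.ne') I_ne_zero), hlog,
    show ((Real.log r : ℂ) + π / 2 * I) * (1 / 2) = ((Real.log r / 2 : ℝ) : ℂ) + I * π / 4 by
      push_cast; ring, exp_add, ← ofReal_exp, Real.sqrt_eq_rpow, Real.rpow_def_of_pos hr]
  ring_nf

/-- The Fresnel integral `∫_{-∞}^{∞} e^{(i/2)x²} dx` exists as an improper Riemann
(Henstock–Kurzweil) integral and equals `√(2π/(-i)) = √(2π)·e^{iπ/4}`. -/
theorem fresnel_integral_exists_and_eq :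
    Tendsto (fun a : ℝ => ∫ x in (-a)..a, Complex.exp (Complex.I / 2 * (x : ℂ) ^ 2))
      atTop
      (nhds ((Real.sqrt (2 * Real.pi) : ℂ) * Complex.exp (Complex.I * Real.pi / 4))) := by
  have hvalue : (π / -(I / 2) : ℂ) = ((2 * π : ℝ) : ℂ) * I := by
    field_simp
    push_cast
    linear_combination (-2 * π : ℂ) * I_sq
  have hgauss := tendsto_integral_cexp_neg_mul_sq (b := -(I / 2)) (by simp) (by simp)
  rw [hvalue, ofReal_mul_I_cpow_one_half two_pi_pos] at hgauss
  simpa only [neg_neg] using hgauss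
end

section
/- For any complex number c = a + ib with a ≤ 0, b ≥ 0, and c ≠ 0, the improper integral ∫_{-∞}^{∞} e^{(c/2)x²} dx exists and equals √(2π/(-c)) (principal branch of the square root). -/
open MeasureTheory Filter Real

open Complex Topology

/-!
For `Re γ < 0` the integral is the Gaussian integral `integral_gaussian_complex`. Integrating
`e^{γx²/2} = (γx)⁻¹ · d/dx e^{γx²/2}` by parts bounds the tails `∫_R^S e^{γx²/2}` by `2 / (|γ| R)`,
uniformly for `Re γ ≤ 0`. Hence `|∫_{-R}^R e^{γx²/2} - √(2π/(-γ))| ≤ 4 / (|γ| R)` for `Re γ < 0`,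
and by continuity in `γ` also for `Re γ = 0`, `γ ≠ 0`, since `2π/(-γ)` stays off the branch cut of
the square root.
-/

lemma norm_cexp_half_mul_sq_le_one {γ : ℂ} (hγ : γ.re ≤ 0) (x : ℝ) :
    ‖cexp (γ / 2 * (x : ℂ) ^ 2)‖ ≤ 1 := by
  rw [Complex.norm_exp, Real.exp_le_one_iff]
  have h : γ / 2 * (x : ℂ) ^ 2 = ((x ^ 2 / 2 : ℝ) : ℂ) * γ := by push_cast; ring
  rw [h, re_ofReal_mul]
  nlinarith [sq_nonneg x]

lemma hasDerivAt_cexp_half_mul_sq (γ : ℂ) (x : ℝ) :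
    HasDerivAt (fun y : ℝ => cexp (γ / 2 * (y : ℂ) ^ 2))
      (γ * x * cexp (γ / 2 * (x : ℂ) ^ 2)) x := by
  convert ((hasDerivAt_pow 2 (x : ℂ)).const_mul (γ / 2)).cexp.comp_ofReal using 1
  push_cast
  ring

lemma continuous_cexp_half_mul_sq :
    Continuous fun p : ℂ × ℝ => cexp (p.1 / 2 * (p.2 : ℂ) ^ 2) := by
  fun_prop

lemma intervalIntegrable_cexp_half_mul_sq (γ : ℂ) (a b : ℝ) :
    IntervalIntegrable (fun x : ℝ => cexp (γ / 2 * (x : ℂ) ^ 2)) volume a b :=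
  (continuous_cexp_half_mul_sq.comp (Continuous.prodMk_right γ)).intervalIntegrable a b

section
variable {γ : ℂ}

lemma integral_cexp_half_mul_sq_eq (hγ0 : γ ≠ 0) {R S : ℝ} (hR : 0 < R) (hRS : R ≤ S) :
    ∫ x in R..S, cexp (γ / 2 * (x : ℂ) ^ 2) =
      cexp (γ / 2 * (S : ℂ) ^ 2) / (γ * S) - cexp (γ / 2 * (R : ℂ) ^ 2) / (γ * R)
        + ∫ x in R..S, cexp (γ / 2 * (x : ℂ) ^ 2) / (γ * (x : ℂ) ^ 2) := by
  have hpos : ∀ x ∈ Set.uIcc R S, 0 < x := fun x hx => hR.trans_le (Set.uIcc_of_le hRS ▸ hx).1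
  have hcont : ContinuousOn (fun x : ℝ => cexp (γ / 2 * (x : ℂ) ^ 2) / (γ * (x : ℂ) ^ 2))
      (Set.uIcc R S) := by
    refine ContinuousOn.div (by fun_prop) (by fun_prop) fun x hx => ?_
    exact mul_ne_zero hγ0 (pow_ne_zero 2 (ofReal_ne_zero.2 (hpos x hx).ne'))
  have hderiv : ∀ x ∈ Set.uIcc R S,
      HasDerivAt (fun y : ℝ => cexp (γ / 2 * (y : ℂ) ^ 2) / (γ * y))
        (cexp (γ / 2 * (x : ℂ) ^ 2) - cexp (γ / 2 * (x : ℂ) ^ 2) / (γ * (x : ℂ) ^ 2)) x := by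
    intro x hx
    have hx0 : (x : ℂ) ≠ 0 := ofReal_ne_zero.2 (hpos x hx).ne'
    refine ((hasDerivAt_cexp_half_mul_sq γ x).fun_div
      ((hasDerivAt_id x).ofReal_comp.const_mul γ) (mul_ne_zero hγ0 hx0)).congr_deriv ?_
    simp only [id, ofReal_one]
    field_simp
  have hftc := intervalIntegral.integral_eq_sub_of_hasDerivAt hderiv
    ((intervalIntegrable_cexp_half_mul_sq γ R S).sub hcont.intervalIntegrable)
  rw [intervalIntegral.integral_sub (intervalIntegrable_cexp_half_mul_sq γ R S)
    hcont.intervalIntegrable] at hftc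
  linear_combination hftc

lemma integral_inv_sq {R S : ℝ} (hR : 0 < R) (hRS : R ≤ S) :
    ∫ x in R..S, (x ^ 2)⁻¹ = R⁻¹ - S⁻¹ := by
  have h := integral_zpow (a := R) (b := S) (n := -2)
    (Or.inr ⟨by norm_num, Set.notMem_uIcc_of_lt hR (hR.trans_le hRS)⟩)
  norm_num [div_neg] at h
  exact h

lemma norm_integral_cexp_half_mul_sq_le (hγ : γ.re ≤ 0) (hγ0 : γ ≠ 0) {R S : ℝ} (hR : 0 < R)
    (hRS : R ≤ S) : ‖∫ x in R..S, cexp (γ / 2 * (x : ℂ) ^ 2)‖ ≤ 2 / (‖γ‖ * R) := by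
  have hγn : 0 < ‖γ‖ := norm_pos_iff.2 hγ0
  have hS : 0 < S := hR.trans_le hRS
  have hboundary : ∀ x : ℝ, 0 < x →
      ‖cexp (γ / 2 * (x : ℂ) ^ 2) / (γ * x)‖ ≤ 1 / (‖γ‖ * x) := by
    intro x hx
    rw [norm_div, norm_mul, norm_real, Real.norm_of_nonneg hx.le]
    exact div_le_div_of_nonneg_right (norm_cexp_half_mul_sq_le_one hγ x) (by positivity)
  have hrest : ‖∫ x in R..S, cexp (γ / 2 * (x : ℂ) ^ 2) / (γ * (x : ℂ) ^ 2)‖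
      ≤ ‖γ‖⁻¹ * (R⁻¹ - S⁻¹) := by
    rw [← integral_inv_sq hR hRS, ← intervalIntegral.integral_const_mul]
    refine intervalIntegral.norm_integral_le_of_norm_le hRS
      (Eventually.of_forall fun x hx => ?_) ?_
    · have hx : 0 < x := hR.trans hx.1
      rw [norm_div, norm_mul, norm_pow, norm_real, Real.norm_of_nonneg hx.le, ← mul_inv, ← one_div]
      exact div_le_div_of_nonneg_right (norm_cexp_half_mul_sq_le_one hγ x) (by positivity)
    · refine (intervalIntegral.intervalIntegrable_inv (fun x hx => ?_)
        (continuous_pow 2).continuousOn).const_mul _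
      exact pow_ne_zero 2 (hR.trans_le (Set.uIcc_of_le hRS ▸ hx).1).ne'
  rw [integral_cexp_half_mul_sq_eq hγ0 hR hRS]
  calc _ ≤ 1 / (‖γ‖ * S) + 1 / (‖γ‖ * R) + ‖γ‖⁻¹ * (R⁻¹ - S⁻¹) :=
        norm_add_le_of_le (norm_sub_le_of_le (hboundary S hS) (hboundary R hR)) hrest
    _ = 2 / (‖γ‖ * R) := by field_simp; ring

lemma norm_intervalIntegral_cexp_half_mul_sq_sub_le (hγ : γ.re ≤ 0) (hγ0 : γ ≠ 0) {R S : ℝ}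
    (hR : 0 < R) (hRS : R ≤ S) :
    ‖(∫ x in (-S)..S, cexp (γ / 2 * (x : ℂ) ^ 2)) - ∫ x in (-R)..R, cexp (γ / 2 * (x : ℂ) ^ 2)‖
      ≤ 4 / (‖γ‖ * R) := by
  have hneg : ∫ x in (-S)..(-R), cexp (γ / 2 * (x : ℂ) ^ 2)
      = ∫ x in R..S, cexp (γ / 2 * (x : ℂ) ^ 2) := by
    rw [← intervalIntegral.integral_comp_neg]
    simp only [ofReal_neg, neg_sq]
  rw [intervalIntegral.integral_interval_sub_interval_comm
    (intervalIntegrable_cexp_half_mul_sq γ _ _) (intervalIntegrable_cexp_half_mul_sq γ _ _)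
    (intervalIntegrable_cexp_half_mul_sq γ _ _), intervalIntegral.integral_symm R S, hneg,
    sub_neg_eq_add]
  have h := norm_integral_cexp_half_mul_sq_le hγ hγ0 hR hRS
  calc _ ≤ 2 / (‖γ‖ * R) + 2 / (‖γ‖ * R) := norm_add_le_of_le h h
    _ = 4 / (‖γ‖ * R) := by ring

lemma integral_cexp_half_mul_sq (hγ : γ.re < 0) :
    ∫ x : ℝ, cexp (γ / 2 * (x : ℂ) ^ 2) = (2 * (π : ℂ) / (-γ)) ^ ((1 : ℂ) / 2) := by
  rw [show 2 * (π : ℂ) / -γ = π / -(γ / 2) by ring]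
  simpa using integral_gaussian_complex (b := -(γ / 2))
    (by simpa using div_neg_of_neg_of_pos hγ two_pos)

lemma integrable_cexp_half_mul_sq (hγ : γ.re < 0) :
    Integrable fun x : ℝ => cexp (γ / 2 * (x : ℂ) ^ 2) := by
  simpa using integrable_cexp_neg_mul_sq (b := -(γ / 2))
    (by simpa using div_neg_of_neg_of_pos hγ two_pos)

lemma norm_intervalIntegral_cexp_half_mul_sq_sub_cpow_le_of_re_neg (hγ : γ.re < 0) {R : ℝ}
    (hR : 0 < R) :
    ‖(∫ x in (-R)..R, cexp (γ / 2 * (x : ℂ) ^ 2)) - (2 * (π : ℂ) / (-γ)) ^ ((1 : ℂ) / 2)‖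
      ≤ 4 / (‖γ‖ * R) := by
  rw [← integral_cexp_half_mul_sq hγ, norm_sub_rev]
  refine le_of_tendsto (((intervalIntegral_tendsto_integral (integrable_cexp_half_mul_sq hγ)
    tendsto_neg_atTop_atBot tendsto_id).sub_const _).norm) ?_
  filter_upwards [eventually_ge_atTop R] with S hS
  exact norm_intervalIntegral_cexp_half_mul_sq_sub_le hγ.le (fun h => by simp [h] at hγ) hR hS

lemma two_pi_div_neg_mem_slitPlane (hγ : γ.re ≤ 0) (hγ0 : γ ≠ 0) :
    2 * (π : ℂ) / (-γ) ∈ slitPlane := by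
  rw [mem_slitPlane_iff]
  rcases hγ.lt_or_eq with hlt | heq
  · left
    have h : 0 < 2 * π * -γ.re / normSq γ :=
      div_pos (by nlinarith [Real.pi_pos]) (normSq_pos.2 hγ0)
    simpa [div_re, neg_div] using h
  · right
    have him : γ.im ≠ 0 := fun him => hγ0 (ext heq him)
    simpa [div_im, hγ0] using him

/-- The boundary case `Re γ = 0` comes from `Re γ < 0` by letting `γ - t → γ` as `t → 0⁺`. -/
lemma norm_intervalIntegral_cexp_half_mul_sq_sub_cpow_le (hγ : γ.re ≤ 0) (hγ0 : γ ≠ 0)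
    {R : ℝ} (hR : 0 < R) :
    ‖(∫ x in (-R)..R, cexp (γ / 2 * (x : ℂ) ^ 2)) - (2 * (π : ℂ) / (-γ)) ^ ((1 : ℂ) / 2)‖
      ≤ 4 / (‖γ‖ * R) := by
  have hint : Continuous fun z : ℂ => ∫ x in (-R)..R, cexp (z / 2 * (x : ℂ) ^ 2) :=
    intervalIntegral.continuous_parametric_intervalIntegral_of_continuous'
      continuous_cexp_half_mul_sq _ _
  have hdiv : ContinuousAt (fun z : ℂ => 2 * (π : ℂ) / -z) γ :=
    continuousAt_const.div continuous_neg.continuousAt (neg_ne_zero.2 hγ0)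
  have hsqrt : ContinuousAt (fun z : ℂ => (2 * (π : ℂ) / -z) ^ ((1 : ℂ) / 2)) γ :=
    ContinuousAt.comp (f := fun z : ℂ => 2 * (π : ℂ) / -z)
      (continuousAt_cpow_const (two_pi_div_neg_mem_slitPlane hγ hγ0)) hdiv
  have hpath : Tendsto (fun t : ℝ => γ - t) (𝓝[>] 0) (𝓝 γ) := by
    have hcont : Continuous fun t : ℝ => γ - t := continuous_const.sub continuous_ofReal
    exact (hcont.tendsto' 0 γ (by simp)).mono_left nhdsWithin_le_nhds
  refine le_of_tendsto_of_tendsto ((hint.continuousAt.sub hsqrt).tendsto.comp hpath).norm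
    (tendsto_const_nhds.div (hpath.norm.mul_const R) (by positivity)) ?_
  filter_upwards [self_mem_nhdsWithin] with t (ht : 0 < t)
  refine norm_intervalIntegral_cexp_half_mul_sq_sub_cpow_le_of_re_neg ?_ hR
  simp only [sub_re, ofReal_re, sub_neg]
  linarith

end

theorem fresnel_integral_general_general (a b : ℝ) (ha : a ≤ 0)
    (c : ℂ) (hc : c = (a : ℂ) + (b : ℂ) * Complex.I) (hc0 : c ≠ 0) :
    Tendsto (fun R : ℝ => ∫ x in (-R)..R, Complex.exp (c / 2 * (x : ℂ) ^ 2))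
      atTop
      (nhds (((2 * (Real.pi : ℂ)) / (-c)) ^ ((1 : ℂ) / 2))) := by
  have hre : c.re ≤ 0 := by simpa [hc] using ha
  rw [← tendsto_sub_nhds_zero_iff]
  refine squeeze_zero_norm' ?_ ((tendsto_const_nhds (x := (4 : ℝ))).div_atTop
    (tendsto_id.const_mul_atTop (norm_pos_iff.2 hc0)))
  filter_upwards [eventually_gt_atTop 0] with R hR
  exact norm_intervalIntegral_cexp_half_mul_sq_sub_cpow_le hre hc0 hR

/-- For `c = a + ib` with `a ≤ 0`, `b ≥ 0`, `c ≠ 0`, the improper integral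
`∫_{-∞}^{∞} e^{(c/2)x²} dx` exists and equals `√(2π/(-c))` (principal branch). -/
theorem fresnel_integral_general (a b : ℝ) (ha : a ≤ 0) (hb : 0 ≤ b)
    (c : ℂ) (hc : c = (a : ℂ) + (b : ℂ) * Complex.I) (hc0 : c ≠ 0) :
    Tendsto (fun R : ℝ => ∫ x in (-R)..R, Complex.exp (c / 2 * (x : ℂ) ^ 2))
      atTop
      (nhds (((2 * (Real.pi : ℂ)) / (-c)) ^ ((1 : ℂ) / 2))) :=
  fresnel_integral_general_general a b ha c hc hc0
end

section
/- The functions x ↦ cos(x²) and x ↦ sin(x²) are improperly Riemann integrable on [0,∞), each with integral (1/2)·√(π/2). -/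
/-!
Regularise by a Gaussian factor. For `Re c ≤ 0`, `c ≠ 0` and `ε > 0`, the complex Gaussian
integral gives `∫₀^∞ e^{(c-ε)x²} dx = ½ (π/(ε-c))^{1/2}`, which tends to `½ (π/(-c))^{1/2}` as
`ε → 0⁺`. On `[0, R]` the factor `e^{-εx²}` moves the integral by at most `εR³/3`, and
integrating by parts against `d/dx (e^{cx²}/(2cx))` bounds every tail `∫_R^∞ e^{cx²}` by
`1/(|c|R)`. Coupling `ε = R⁻⁴` makes both errors vanish as `R → ∞`. For `c = i` we get
`½ (πi)^{1/2} = ½ √(π/2) (1 + i)`, whose real and imaginary parts are the two Fresnel integrals.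
-/

open MeasureTheory Filter Real

open Complex Set intervalIntegral Topology

lemma norm_cexp_mul_sq_le_one {c : ℂ} (hc : c.re ≤ 0) (x : ℝ) : ‖cexp (c * x ^ 2)‖ ≤ 1 := by
  rw [norm_exp, Real.exp_le_one_iff, ← ofReal_pow, re_mul_ofReal]
  exact mul_nonpos_of_nonpos_of_nonneg hc (sq_nonneg x)

lemma hasDerivAt_cexp_mul_sq_div {c : ℂ} (hc : c ≠ 0) {x : ℝ} (hx : x ≠ 0) :
    HasDerivAt (fun y : ℝ => cexp (c * y ^ 2) / (2 * c * y))
      (cexp (c * x ^ 2) - cexp (c * x ^ 2) / (2 * c * x ^ 2)) x := by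
  have hx' : (x : ℂ) ≠ 0 := ofReal_ne_zero.2 hx
  have hnum : HasDerivAt (fun z : ℂ => cexp (c * z ^ 2)) (cexp (c * x ^ 2) * (c * (2 * x))) x := by
    simpa using ((hasDerivAt_pow 2 (x : ℂ)).const_mul c).cexp
  have hden : HasDerivAt (fun z : ℂ => 2 * c * z) (2 * c) x := by
    simpa using (hasDerivAt_id (x : ℂ)).const_mul (2 * c)
  refine (hnum.comp_ofReal.div hden.comp_ofReal (by simp [hc, hx'])).congr_deriv ?_
  field_simp

lemma integral_inv_sq_s2 {a b : ℝ} (h : (0 : ℝ) ∉ uIcc a b) :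
    ∫ x in a..b, (x ^ 2)⁻¹ = a⁻¹ - b⁻¹ := by
  have hpos : ∀ x ∈ uIcc a b, x ≠ 0 := fun x hx hx0 => h (hx0 ▸ hx)
  rw [integral_eq_sub_of_hasDerivAt (f := fun x => -x⁻¹) (f' := fun x => (x ^ 2)⁻¹)
    (fun x hx => (hasDerivAt_inv (hpos x hx)).neg.congr_deriv (neg_neg _))
    ((continuousOn_pow 2).inv₀ fun x hx => pow_ne_zero 2 (hpos x hx)).intervalIntegrable]
  ring

lemma norm_integral_cexp_mul_sq_le {c : ℂ} (hc : c ≠ 0) (hre : c.re ≤ 0) {R S : ℝ}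
    (hR : 0 < R) (hRS : R ≤ S) :
    ‖∫ x in R..S, cexp (c * x ^ 2)‖ ≤ 1 / (‖c‖ * R) := by
  set w : ℝ → ℂ := fun y => cexp (c * y ^ 2) / (2 * c * y)
  set v : ℝ → ℂ := fun y => cexp (c * y ^ 2) / (2 * c * y ^ 2)
  have hpos : ∀ x ∈ uIcc R S, 0 < x := fun x hx =>
    hR.trans_le (by rw [uIcc_of_le hRS] at hx; exact hx.1)
  have hv : ContinuousOn v (uIcc R S) := by
    refine ContinuousOn.div (by fun_prop) (by fun_prop) fun x hx => ?_
    simp [hc, (hpos x hx).ne']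
  have hibp : ∫ x in R..S, cexp (c * x ^ 2) = (w S - w R) + ∫ x in R..S, v x := by
    rw [← integral_eq_sub_of_hasDerivAt
      (fun x hx => hasDerivAt_cexp_mul_sq_div hc (hpos x hx).ne')
      ((Continuous.continuousOn (by fun_prop)).sub hv).intervalIntegrable,
      integral_sub (Continuous.intervalIntegrable (by fun_prop) _ _) hv.intervalIntegrable]
    ring
  have hw : ∀ x, 0 < x → ‖w x‖ ≤ (2 * ‖c‖)⁻¹ * x⁻¹ := fun x hx => by
    rw [norm_div, norm_mul, norm_mul, norm_real, Real.norm_of_nonneg hx.le, Complex.norm_ofNat,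
      ← mul_inv, ← one_div]
    gcongr
    exact norm_cexp_mul_sq_le_one hre x
  have hvint : ‖∫ x in R..S, v x‖ ≤ (2 * ‖c‖)⁻¹ * (R⁻¹ - S⁻¹) := by
    rw [← integral_inv_sq_s2 fun h0 => (hpos 0 h0).false, ← intervalIntegral.integral_const_mul]
    refine norm_integral_le_of_norm_le hRS (ae_of_all _ fun x hx => ?_) ?_
    · have hx : 0 < x := hR.trans hx.1
      rw [norm_div, norm_mul, norm_mul, ← ofReal_pow, norm_real,
        Real.norm_of_nonneg (by positivity), Complex.norm_ofNat, ← mul_inv, ← one_div, ofReal_pow]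
      gcongr
      exact norm_cexp_mul_sq_le_one hre x
    · exact (continuousOn_const.mul ((continuousOn_pow 2).inv₀ fun x hx =>
        pow_ne_zero 2 (hpos x hx).ne')).intervalIntegrable
  calc ‖∫ x in R..S, cexp (c * x ^ 2)‖ ≤ ‖w S‖ + ‖w R‖ + ‖∫ x in R..S, v x‖ := by
        rw [hibp]; exact (norm_add_le _ _).trans (by gcongr; exact norm_sub_le _ _)
    _ ≤ (2 * ‖c‖)⁻¹ * S⁻¹ + (2 * ‖c‖)⁻¹ * R⁻¹ + (2 * ‖c‖)⁻¹ * (R⁻¹ - S⁻¹) := by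
        gcongr
        exacts [hw S (hR.trans_le hRS), hw R hR]
    _ = 1 / (‖c‖ * R) := by field_simp; ring

lemma integrable_cexp_mul_sq {c : ℂ} (hre : c.re < 0) :
    Integrable fun x : ℝ => cexp (c * x ^ 2) := by
  simpa using integrable_cexp_neg_mul_sq (b := -c) (by simpa using hre)

lemma norm_integral_Ioi_cexp_mul_sq_le {c : ℂ} (hre : c.re < 0) {R : ℝ} (hR : 0 < R) :
    ‖∫ x in Ioi R, cexp (c * x ^ 2)‖ ≤ 1 / (‖c‖ * R) := by
  have hc : c ≠ 0 := fun h => by simp [h] at hre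
  refine le_of_tendsto ((continuous_norm.tendsto _).comp (intervalIntegral_tendsto_integral_Ioi R
    (integrable_cexp_mul_sq hre).integrableOn tendsto_id)) ?_
  filter_upwards [eventually_ge_atTop R] with S hS
  exact norm_integral_cexp_mul_sq_le hc hre.le hR hS

lemma norm_cexp_sub_cexp_sub_le {z : ℂ} (hz : z.re ≤ 0) {t : ℝ} (ht : 0 ≤ t) :
    ‖cexp z - cexp (z - t)‖ ≤ t := by
  have hexp : 1 - Real.exp (-t) ≤ t := by linarith [Real.one_sub_le_exp_neg t]
  rw [sub_eq_add_neg z, Complex.exp_add, ← mul_one_sub, norm_mul, ← ofReal_neg, ← ofReal_exp,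
    ← ofReal_one, ← ofReal_sub, norm_real, Real.norm_of_nonneg (by simpa using ht)]
  calc ‖cexp z‖ * (1 - Real.exp (-t)) ≤ 1 * t := by
        gcongr
        · simpa using neg_nonpos.2 ht
        · rwa [norm_exp, Real.exp_le_one_iff]
    _ = t := one_mul t

lemma norm_integral_cexp_mul_sq_sub_le {c : ℂ} (hre : c.re ≤ 0) {ε R : ℝ} (hε : 0 ≤ ε)
    (hR : 0 ≤ R) :
    ‖(∫ x in 0..R, cexp (c * x ^ 2)) - ∫ x in 0..R, cexp ((c - ε) * x ^ 2)‖ ≤ ε * R ^ 3 / 3 := by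
  rw [← integral_sub (Continuous.intervalIntegrable (by fun_prop) _ _)
    (Continuous.intervalIntegrable (by fun_prop) _ _)]
  calc _ ≤ ∫ x in 0..R, ε * x ^ 2 := by
        refine norm_integral_le_of_norm_le hR (ae_of_all _ fun x _ => ?_)
          (Continuous.intervalIntegrable (by fun_prop) _ _)
        have h := norm_cexp_sub_cexp_sub_le (z := c * x ^ 2) ?_ (t := ε * x ^ 2) (by positivity)
        · simpa [sub_mul] using h
        · simpa [← ofReal_pow] using mul_nonpos_of_nonpos_of_nonneg hre (sq_nonneg x)
    _ = ε * R ^ 3 / 3 := by rw [intervalIntegral.integral_const_mul, integral_pow]; ring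

lemma ofReal_div_mem_slitPlane {r : ℝ} (hr : 0 < r) {b : ℂ} (hb : b ≠ 0) (hre : 0 ≤ b.re) :
    (r : ℂ) / b ∈ slitPlane := by
  have hn : 0 < normSq b := normSq_pos.2 hb
  rw [mem_slitPlane_iff, div_re, div_im]
  rcases hre.lt_or_eq with h | h
  · left; simp only [ofReal_re, ofReal_im, zero_mul, zero_div, add_zero]; positivity
  · right
    have him : b.im ≠ 0 := fun him => hb (Complex.ext h.symm him)
    simp only [ofReal_re, ofReal_im, zero_mul, zero_div, zero_sub]
    exact neg_ne_zero.2 (div_ne_zero (mul_ne_zero hr.ne' him) hn.ne')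

lemma tendsto_integral_Ioi_cexp_sub_mul_sq {c : ℂ} (hc : c ≠ 0) (hre : c.re ≤ 0) :
    Tendsto (fun ε : ℝ => ∫ x : ℝ in Ioi 0, cexp ((c - ε) * x ^ 2)) (𝓝[>] 0)
      (𝓝 ((π / -c) ^ (1 / 2 : ℂ) / 2)) := by
  have hcont : ContinuousAt (fun ε : ℝ => ((π : ℂ) / (ε - c)) ^ (1 / 2 : ℂ) / 2) 0 := by
    refine ((continuousAt_const.div (by fun_prop) (by simpa using hc)).cpow continuousAt_const
      ?_).div_const 2
    simpa using ofReal_div_mem_slitPlane pi_pos (neg_ne_zero.2 hc) (by simpa using hre)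
  have hlim := hcont.tendsto.mono_left (nhdsWithin_le_nhds (s := Ioi 0))
  rw [ofReal_zero, zero_sub] at hlim
  refine hlim.congr' ?_
  filter_upwards [self_mem_nhdsWithin] with ε (hε : 0 < ε)
  rw [← integral_gaussian_complex_Ioi (b := ε - c) (by simpa using hre.trans_lt hε)]
  simp only [neg_sub]

lemma norm_le_norm_sub_ofReal {c : ℂ} (hc : c.re ≤ 0) {ε : ℝ} (hε : 0 ≤ ε) :
    ‖c‖ ≤ ‖c - ε‖ := by
  rw [← sq_le_sq₀ (norm_nonneg _) (norm_nonneg _), Complex.sq_norm, Complex.sq_norm,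
    normSq_apply, normSq_apply]
  simp only [sub_re, ofReal_re, sub_im, ofReal_im, sub_zero]
  nlinarith

lemma tendsto_integral_cexp_mul_sq {c : ℂ} (hc : c ≠ 0) (hre : c.re ≤ 0) :
    Tendsto (fun R : ℝ => ∫ x in 0..R, cexp (c * x ^ 2)) atTop
      (𝓝 ((π / -c) ^ (1 / 2 : ℂ) / 2)) := by
  set G : ℝ → ℂ := fun ε => ∫ x : ℝ in Ioi 0, cexp ((c - ε) * x ^ 2)
  have hε : Tendsto (fun R : ℝ => (R ^ 4)⁻¹) atTop (𝓝[>] 0) :=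
    tendsto_inv_atTop_nhdsGT_zero.comp (tendsto_pow_atTop (by norm_num))
  have hdiff : ∀ᶠ R : ℝ in atTop,
      ‖(∫ x in 0..R, cexp (c * x ^ 2)) - G (R ^ 4)⁻¹‖ ≤ (1 / 3 + ‖c‖⁻¹) * R⁻¹ := by
    filter_upwards [eventually_gt_atTop 0] with R hR
    set ε := (R ^ 4)⁻¹
    have hε0 : 0 < ε := by positivity
    have hint := integrable_cexp_mul_sq (c := c - ε) (by simpa using hre.trans_lt hε0)
    have hsplit : G ε =
        (∫ x in 0..R, cexp ((c - ε) * x ^ 2)) + ∫ x in Ioi R, cexp ((c - ε) * x ^ 2) := by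
      rw [← integral_Ioi_sub_Ioi' hint.integrableOn hint.integrableOn]; ring
    calc _ ≤ ‖(∫ x in 0..R, cexp (c * x ^ 2)) - ∫ x in 0..R, cexp ((c - ε) * x ^ 2)‖
          + ‖∫ x in Ioi R, cexp ((c - ε) * x ^ 2)‖ := by
          rw [hsplit, ← sub_sub]; exact norm_sub_le _ _
      _ ≤ ε * R ^ 3 / 3 + 1 / (‖c‖ * R) := by
          gcongr
          · exact norm_integral_cexp_mul_sq_sub_le hre hε0.le hR.le
          · refine (norm_integral_Ioi_cexp_mul_sq_le (by simpa using hre.trans_lt hε0) hR).trans ?_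
            gcongr
            exact norm_le_norm_sub_ofReal hre hε0.le
      _ = (1 / 3 + ‖c‖⁻¹) * R⁻¹ := by simp only [ε]; field_simp
  have hzero := squeeze_zero_norm' hdiff
    (by simpa using tendsto_inv_atTop_zero.const_mul (1 / 3 + ‖c‖⁻¹))
  have hlim := hzero.add ((tendsto_integral_Ioi_cexp_sub_mul_sq hc hre).comp hε)
  rw [zero_add] at hlim
  exact hlim.congr fun R => sub_add_cancel _ _

lemma pi_div_neg_I_cpow_half : ((π : ℂ) / -I) ^ (1 / 2 : ℂ) = √(π / 2) * (1 + I) := by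
  have hexp : (Real.log π + π / 2 * I) * (1 / 2 : ℂ) = (Real.log π / 2 : ℝ) + (π / 4 : ℝ) * I := by
    push_cast; ring
  have hsqrt : √π * (√2 / 2) = √(π / 2) := by
    rw [Real.sqrt_div' _ zero_le_two]
    field_simp
    rw [Real.sq_sqrt zero_le_two]
  rw [div_neg, div_I, neg_neg, cpow_def_of_ne_zero (by simp [pi_ne_zero]),
    log_ofReal_mul pi_pos I_ne_zero, log_I, hexp, Complex.exp_add, exp_mul_I, ← ofReal_exp,
    ← ofReal_cos, ← ofReal_sin, Real.exp_half, Real.exp_log pi_pos, Real.cos_pi_div_four,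
    Real.sin_pi_div_four, ← hsqrt]
  push_cast
  ring

lemma integral_cexp_I_mul_sq (a b : ℝ) :
    ∫ x in a..b, cexp (I * x ^ 2) =
      (∫ x in a..b, Real.cos (x ^ 2)) + (∫ x in a..b, Real.sin (x ^ 2)) * I := by
  have h : ∀ x : ℝ, cexp (I * x ^ 2) = (Real.cos (x ^ 2) : ℂ) + (Real.sin (x ^ 2) : ℂ) * I := by
    intro x
    rw [mul_comm, ← ofReal_pow, exp_mul_I, ofReal_cos, ofReal_sin]
  simp_rw [h]
  rw [integral_add (Continuous.intervalIntegrable (by fun_prop) _ _)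
      (Continuous.intervalIntegrable (by fun_prop) _ _), intervalIntegral.integral_mul_const,
    intervalIntegral.integral_ofReal, intervalIntegral.integral_ofReal]

/-- The classical Fresnel integrals: `x ↦ cos(x²)` and `x ↦ sin(x²)` are improperly
Riemann integrable on `[0,∞)`, each with integral `(1/2)·√(π/2)`. -/
theorem fresnel_cos_sin_integrals :
    Tendsto (fun R : ℝ => ∫ x in (0 : ℝ)..R, Real.cos (x ^ 2)) atTop
      (nhds ((1 / 2) * Real.sqrt (Real.pi / 2))) ∧
    Tendsto (fun R : ℝ => ∫ x in (0 : ℝ)..R, Real.sin (x ^ 2)) atTop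
      (nhds ((1 / 2) * Real.sqrt (Real.pi / 2))) := by
  have h := tendsto_integral_cexp_mul_sq I_ne_zero (by simp)
  have hval : (√(π / 2) * (1 + I) / 2 : ℂ) =
      (1 / 2 * √(π / 2) : ℝ) + (1 / 2 * √(π / 2) : ℝ) * I := by
    push_cast; ring
  simp_rw [pi_div_neg_I_cpow_half, hval, integral_cexp_I_mul_sq] at h
  exact ⟨by simpa [Function.comp_def] using (continuous_re.tendsto _).comp h,
    by simpa [Function.comp_def] using (continuous_im.tendsto _).comp h⟩
end

section
/- For n ≥ 1, the n-fold improper integral ∫_{ℝⁿ} e^{(i/2)(x₁²+⋯+x_n²)} dx, understood as the limit over expanding boxes [-a,a]ⁿ of iterated integrals, equals (√(2π/(-i)))ⁿ. -/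
/-!
For `Re b > 0` the half-line Gaussian integral `∫₀^∞ exp (-b x²) = (π / b) ^ (1/2) / 2` is known.
For `b ≠ 0` with `Re b ≥ 0`, integration by parts on `[1, R]` shows that `∫₀^R exp (-b x²)`
still converges as `R → ∞`, to an explicit expression that is continuous in `b` on the closed
right half-plane minus the origin (dominated convergence). Both sides being continuous there,
the identity extends from `Re b > 0` to the imaginary axis; `b = -i/2` is the Fresnel integral.
The integrand over the box `[-a, a]ⁿ` is a product, so by Fubini the box integral is the
`n`-th power of the one-dimensional one.
-/

open MeasureTheory Filter Real Set Topology
open scoped Complex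

lemma Function.Even.intervalIntegral_neg_eq_two_nsmul {E : Type*} [NormedAddCommGroup E]
    [NormedSpace ℝ E] {f : ℝ → E} (hf : f.Even) (hfc : Continuous f) (R : ℝ) :
    ∫ x in (-R)..R, f x = 2 • ∫ x in (0 : ℝ)..R, f x := by
  have hleft : ∫ x in (-R)..0, f x = ∫ x in (0 : ℝ)..R, f x := by
    simpa [hf _] using (intervalIntegral.integral_comp_neg (a := 0) (b := R) f).symm
  rw [← intervalIntegral.integral_add_adjacent_intervals (b := 0) (hfc.intervalIntegrable _ _)
    (hfc.intervalIntegrable _ _), hleft, two_nsmul]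

lemma setIntegral_univ_pi_prod_eq_pow {ι E 𝕜 : Type*} [Fintype ι] [RCLike 𝕜] [MeasureSpace E]
    [SigmaFinite (volume : Measure E)] (s : Set E) (f : E → 𝕜) :
    ∫ x in univ.pi (fun _ : ι => s), ∏ i, f (x i) = (∫ t in s, f t) ^ Fintype.card ι := by
  rw [volume_pi, Measure.restrict_pi_pi, integral_fintype_prod_eq_pow]

lemma integrableOn_Ioi_one_inv_sq : IntegrableOn (fun x : ℝ => (x ^ 2)⁻¹) (Ioi 1) := by
  refine (integrableOn_Ioi_rpow_of_lt (by norm_num : (-2 : ℝ) < -1) one_pos).congr_fun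
    (fun x hx => ?_) measurableSet_Ioi
  simp only [Real.rpow_neg (zero_le_one.trans (le_of_lt hx)), Real.rpow_two]

section

variable {b : ℂ}

lemma norm_cexp_neg_mul_sq_le_one (hb : 0 ≤ b.re) (x : ℝ) : ‖cexp (-b * x ^ 2)‖ ≤ 1 := by
  rw [norm_cexp_neg_mul_sq, Real.exp_le_one_iff]
  nlinarith [sq_nonneg x]

lemma norm_cexp_neg_mul_sq_div_sq_le (hb : 0 ≤ b.re) (x : ℝ) :
    ‖cexp (-b * x ^ 2) / (x : ℂ) ^ 2‖ ≤ (x ^ 2)⁻¹ := by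
  rw [norm_div, norm_pow, Complex.norm_real, Real.norm_eq_abs, sq_abs, div_eq_mul_inv]
  exact mul_le_of_le_one_left (by positivity) (norm_cexp_neg_mul_sq_le_one hb x)

lemma integrableOn_Ioi_one_cexp_neg_mul_sq_div_sq (hb : 0 ≤ b.re) :
    IntegrableOn (fun x : ℝ => cexp (-b * x ^ 2) / (x : ℂ) ^ 2) (Ioi 1) :=
  integrableOn_Ioi_one_inv_sq.mono' (by fun_prop : Measurable _).aestronglyMeasurable
    (Eventually.of_forall (norm_cexp_neg_mul_sq_div_sq_le hb))

lemma intervalIntegral_one_cexp_neg_mul_sq (hb : b ≠ 0) {R : ℝ} (hR : 0 < R) :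
    ∫ x in (1 : ℝ)..R, cexp (-b * x ^ 2) =
      (2 * b)⁻¹ * (cexp (-b) - cexp (-b * R ^ 2) / R -
        ∫ x in (1 : ℝ)..R, cexp (-b * x ^ 2) / (x : ℂ) ^ 2) := by
  have hpos : ∀ x ∈ uIcc 1 R, (x : ℂ) ≠ 0 := fun x hx =>
    Complex.ofReal_ne_zero.mpr ((lt_min one_pos hR).trans_le hx.1).ne'
  have ibp := intervalIntegral.integral_mul_deriv_eq_deriv_mul
    (u := fun x : ℝ => -(2 * b)⁻¹ * (x : ℂ)⁻¹) (u' := fun x : ℝ => (2 * b)⁻¹ * ((x : ℂ) ^ 2)⁻¹)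
    (v := fun x : ℝ => cexp (-b * x ^ 2)) (v' := fun x : ℝ => -2 * b * x * cexp (-b * x ^ 2))
    (fun x hx => by
      convert ((hasDerivAt_inv (hpos x hx)).comp_ofReal.const_mul (-(2 * b)⁻¹)) using 1
      ring)
    (fun x _ => (((hasDerivAt_pow 2 (x : ℂ)).const_mul (-b)).cexp.comp_ofReal).congr_deriv
      (by push_cast; ring))
    (ContinuousOn.intervalIntegrable <| continuousOn_const.mul <|
      ContinuousOn.inv₀ (by fun_prop) fun x hx => pow_ne_zero 2 (hpos x hx))
    ((by fun_prop : Continuous _).intervalIntegrable _ _)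
  have hlhs : ∫ x in (1 : ℝ)..R, -(2 * b)⁻¹ * (x : ℂ)⁻¹ * (-2 * b * x * cexp (-b * x ^ 2)) =
      ∫ x in (1 : ℝ)..R, cexp (-b * x ^ 2) :=
    intervalIntegral.integral_congr fun x hx => by field_simp [hpos x hx]
  have hrhs : ∫ x in (1 : ℝ)..R, (2 * b)⁻¹ * ((x : ℂ) ^ 2)⁻¹ * cexp (-b * x ^ 2) =
      (2 * b)⁻¹ * ∫ x in (1 : ℝ)..R, cexp (-b * x ^ 2) / (x : ℂ) ^ 2 := by
    rw [← intervalIntegral.integral_const_mul]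
    exact intervalIntegral.integral_congr fun x _ => by ring
  rw [← hlhs, ibp, hrhs]
  simp only [Complex.ofReal_one, inv_one, one_pow, mul_one]
  ring

/-- Integrating by parts against `d(-1 / (2 b x))` on `[1, ∞)` turns the oscillating tail of
`∫₀^∞ exp (-b x²)` into the absolutely convergent `∫₁^∞ exp (-b x²) / x²`. -/
noncomputable def gaussianHalfLineLimit (b : ℂ) : ℂ :=
  (∫ x in (0 : ℝ)..1, cexp (-b * x ^ 2)) +
    (2 * b)⁻¹ * (cexp (-b) - ∫ x in Ioi (1 : ℝ), cexp (-b * x ^ 2) / (x : ℂ) ^ 2)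

lemma tendsto_cexp_neg_mul_sq_div_atTop (hb : 0 ≤ b.re) :
    Tendsto (fun R : ℝ => cexp (-b * R ^ 2) / R) atTop (𝓝 0) := by
  refine squeeze_zero_norm' ?_ tendsto_inv_atTop_zero
  filter_upwards [eventually_gt_atTop 0] with R hR
  rw [norm_div, Complex.norm_real, Real.norm_of_nonneg hR.le, div_eq_mul_inv]
  exact mul_le_of_le_one_left (by positivity) (norm_cexp_neg_mul_sq_le_one hb R)

lemma tendsto_intervalIntegral_zero_cexp_neg_mul_sq (hb : 0 ≤ b.re) (hb₀ : b ≠ 0) :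
    Tendsto (fun R : ℝ => ∫ x in (0 : ℝ)..R, cexp (-b * x ^ 2)) atTop
      (𝓝 (gaussianHalfLineLimit b)) := by
  have htail := intervalIntegral_tendsto_integral_Ioi 1
    (integrableOn_Ioi_one_cexp_neg_mul_sq_div_sq hb) tendsto_id
  have hlim := (((tendsto_const_nhds (x := cexp (-b))).sub
    (tendsto_cexp_neg_mul_sq_div_atTop hb)).sub htail).const_mul (2 * b)⁻¹
    |>.const_add (∫ x in (0 : ℝ)..1, cexp (-b * x ^ 2))
  rw [sub_zero] at hlim
  refine hlim.congr' ?_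
  filter_upwards [eventually_gt_atTop 0] with R hR
  rw [id, ← intervalIntegral_one_cexp_neg_mul_sq hb₀ hR,
    intervalIntegral.integral_add_adjacent_intervals] <;>
    exact (by fun_prop : Continuous _).intervalIntegrable _ _

lemma continuousOn_integral_Ioi_one_cexp_neg_mul_sq_div_sq :
    ContinuousOn (fun b : ℂ => ∫ x in Ioi (1 : ℝ), cexp (-b * x ^ 2) / (x : ℂ) ^ 2)
      {b | 0 ≤ b.re} :=
  continuousOn_of_dominated (fun _ _ => (by fun_prop : Measurable _).aestronglyMeasurable)
    (fun _ hb => Eventually.of_forall (norm_cexp_neg_mul_sq_div_sq_le hb))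
    integrableOn_Ioi_one_inv_sq (Eventually.of_forall fun _ => by fun_prop)

lemma continuousOn_gaussianHalfLineLimit :
    ContinuousOn gaussianHalfLineLimit ({b | 0 ≤ b.re} \ {0}) := by
  refine ((intervalIntegral.continuous_parametric_intervalIntegral_of_continuous'
    (by fun_prop) 0 1).continuousOn).add (ContinuousOn.mul ?_ ?_)
  · exact (continuousOn_const.mul continuousOn_id).inv₀ fun b hb =>
      mul_ne_zero two_ne_zero hb.2
  · exact (by fun_prop : Continuous fun b : ℂ => cexp (-b)).continuousOn.sub
      (continuousOn_integral_Ioi_one_cexp_neg_mul_sq_div_sq.mono sdiff_subset)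

lemma gaussianHalfLineLimit_of_re_pos (hb : 0 < b.re) :
    gaussianHalfLineLimit b = (π / b) ^ (1 / 2 : ℂ) / 2 := by
  refine tendsto_nhds_unique (tendsto_intervalIntegral_zero_cexp_neg_mul_sq hb.le
    (ne_of_apply_ne Complex.re hb.ne')) ?_
  rw [← integral_gaussian_complex_Ioi hb]
  exact intervalIntegral_tendsto_integral_Ioi 0 (integrable_cexp_neg_mul_sq hb).integrableOn
    tendsto_id

lemma div_mem_slitPlane_of_re_nonneg {r : ℝ} (hr : 0 < r) (hb : 0 ≤ b.re) (hb₀ : b ≠ 0) :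
    (r / b : ℂ) ∈ Complex.slitPlane := by
  rw [Complex.mem_slitPlane_iff, Complex.div_re, Complex.div_im]
  have hn : 0 < Complex.normSq b := Complex.normSq_pos.mpr hb₀
  rcases hb.lt_or_eq with hre | hre
  · left
    simp only [Complex.ofReal_re, Complex.ofReal_im, zero_mul, zero_div, add_zero]
    positivity
  · right
    have him : b.im ≠ 0 := fun h => hb₀ (Complex.ext hre.symm h)
    simp [hr.ne', him, hb₀]

lemma gaussianHalfLineLimit_eq (hb : 0 ≤ b.re) (hb₀ : b ≠ 0) :
    gaussianHalfLineLimit b = (π / b) ^ (1 / 2 : ℂ) / 2 := by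
  have hcpow :
      ContinuousOn (fun b : ℂ => (π / b) ^ (1 / 2 : ℂ) / 2) ({b | 0 ≤ b.re} \ {0}) := fun b hb =>
    ((continuousAt_const.div continuousAt_id hb.2).cpow continuousAt_const
      (div_mem_slitPlane_of_re_nonneg pi_pos hb.1 hb.2)).div_const 2 |>.continuousWithinAt
  refine Set.EqOn.of_subset_closure (s := {b : ℂ | 0 < b.re})
    (fun b hb => gaussianHalfLineLimit_of_re_pos hb) continuousOn_gaussianHalfLineLimit
    hcpow ?_ ?_ ⟨hb, hb₀⟩
  · exact fun b (hb : 0 < b.re) => ⟨hb.le, ne_of_apply_ne Complex.re hb.ne'⟩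
  · rw [Complex.closure_setOfPred_lt_re]
    exact sdiff_subset

theorem tendsto_intervalIntegral_cexp_neg_mul_sq (hb : 0 ≤ b.re) (hb₀ : b ≠ 0) :
    Tendsto (fun R : ℝ => ∫ x in (-R)..R, cexp (-b * x ^ 2)) atTop
      (𝓝 ((π / b) ^ (1 / 2 : ℂ))) := by
  have heven : Function.Even fun x : ℝ => cexp (-b * x ^ 2) := fun x => by simp
  have h := (tendsto_intervalIntegral_zero_cexp_neg_mul_sq hb hb₀).const_mul 2
  rw [gaussianHalfLineLimit_eq hb hb₀, mul_div_cancel₀ _ two_ne_zero] at h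
  refine h.congr fun R => ?_
  rw [heven.intervalIntegral_neg_eq_two_nsmul (by fun_prop), two_nsmul, two_mul]

end

lemma ofReal_mul_I_cpow_half {r : ℝ} (hr : 0 < r) :
    ((r : ℂ) * Complex.I) ^ (1 / 2 : ℂ) = (√r : ℂ) * cexp (Complex.I * π / 4) := by
  have hne : (r : ℂ) * Complex.I ≠ 0 :=
    mul_ne_zero (Complex.ofReal_ne_zero.mpr hr.ne') Complex.I_ne_zero
  rw [Complex.cpow_def_of_ne_zero hne, Complex.log_ofReal_mul hr Complex.I_ne_zero, Complex.log_I,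
    Real.sqrt_eq_rpow, Real.rpow_def_of_pos hr, Complex.ofReal_exp, ← Complex.exp_add]
  push_cast [Complex.ofReal_log hr.le]
  ring_nf

lemma pi_div_neg_I_div_two : (π : ℂ) / (-(Complex.I / 2)) = (2 * π : ℝ) * Complex.I := by
  field_simp
  push_cast
  ring_nf
  simp

theorem tendsto_intervalIntegral_cexp_I_div_two_mul_sq :
    Tendsto (fun a : ℝ => ∫ x in (-a)..a, cexp (Complex.I / 2 * x ^ 2)) atTop
      (𝓝 ((√(2 * π) : ℂ) * cexp (Complex.I * π / 4))) := by
  have h := tendsto_intervalIntegral_cexp_neg_mul_sq (b := -(Complex.I / 2)) (by simp) (by simp)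
  rw [pi_div_neg_I_div_two, ofReal_mul_I_cpow_half (by positivity)] at h
  simpa only [neg_neg] using h

theorem fresnel_integral_multidim_general (n : ℕ) :
    Tendsto
      (fun a : ℝ =>
        ∫ x in Set.univ.pi (fun _ : Fin n => Set.Icc (-a) a),
          Complex.exp (Complex.I / 2 * ∑ j : Fin n, ((x j : ℂ)) ^ 2))
      atTop
      (nhds (((Real.sqrt (2 * Real.pi) : ℂ) * Complex.exp (Complex.I * Real.pi / 4)) ^ n)) := by
  refine (tendsto_intervalIntegral_cexp_I_div_two_mul_sq.pow n).congr' ?_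
  filter_upwards [eventually_ge_atTop 0] with a ha
  simp_rw [Finset.mul_sum, Complex.exp_sum]
  rw [setIntegral_univ_pi_prod_eq_pow _ fun t : ℝ => cexp (Complex.I / 2 * t ^ 2),
    Fintype.card_fin, intervalIntegral.integral_of_le (by linarith), integral_Icc_eq_integral_Ioc]

/-- For `n ≥ 1`, the improper integral of `e^{(i/2)(x₁²+⋯+x_n²)}` over expanding boxes
`[-a,a]ⁿ` equals `(√(2π/(-i)))ⁿ = (√(2π)·e^{iπ/4})ⁿ`. -/
theorem fresnel_integral_multidim (n : ℕ) (hn : 1 ≤ n) :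
    Tendsto
      (fun a : ℝ =>
        ∫ x in Set.univ.pi (fun _ : Fin n => Set.Icc (-a) a),
          Complex.exp (Complex.I / 2 * ∑ j : Fin n, ((x j : ℂ)) ^ 2))
      atTop
      (nhds (((Real.sqrt (2 * Real.pi) : ℂ) * Complex.exp (Complex.I * Real.pi / 4)) ^ n)) :=
  fresnel_integral_multidim_general n
end

section
/- If f : [a,b] → ℝ is Lebesgue integrable, then f is Henstock–Kurzweil integrable on [a,b] and the two integrals agree. -/
open MeasureTheory Filter BoxIntegral

/-- `HasHK a b f I` : `f` is Henstock–Kurzweil integrable on `[a,b]` (with `a < b`)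
with integral `I`, phrased via the Henstock box integral in dimension one. -/
def HasHK (a b : ℝ) (f : ℝ → ℝ) (I : ℝ) : Prop :=
  ∃ h : a < b,
    BoxIntegral.HasIntegral (ι := Fin 1)
      ⟨fun _ => a, fun _ => b, fun _ => h⟩
      BoxIntegral.IntegrationParams.Henstock
      (fun x => f (x 0))
      BoxIntegral.BoxAdditiveMap.volume I

/-- Every Lebesgue integrable function on `[a,b]` is Henstock–Kurzweil integrable
there, with the same value of the integral. -/
theorem lebesgue_integrable_implies_HK (a b : ℝ) (hab : a < b) (f : ℝ → ℝ)
    (hf : MeasureTheory.IntegrableOn f (Set.Icc a b)) :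
    HasHK a b f (∫ x in Set.Icc a b, f x) := by
  refine ⟨hab, ?_⟩
  set I : Box (Fin 1) := ⟨fun _ => a, fun _ => b, fun _ => hab⟩ with hI
  have hmp : MeasurePreserving (MeasurableEquiv.funUnique (Fin 1) ℝ) volume volume :=
    volume_preserving_funUnique (Fin 1) ℝ
  have hset : (I : Set (Fin 1 → ℝ)) =
      (MeasurableEquiv.funUnique (Fin 1) ℝ) ⁻¹' (Set.Ioc a b) := by
    ext x
    simp only [Box.mem_coe, Box.mem_def, Set.mem_preimage, Set.mem_Ioc,
      MeasurableEquiv.funUnique_apply]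
    constructor
    · intro h; exact h 0
    · intro h i; have : i = 0 := Subsingleton.elim _ _; rw [this]; exact h
  have hIoc : IntegrableOn f (Set.Ioc a b) := hf.mono_set Set.Ioc_subset_Icc_self
  have hmp2 : MeasurePreserving (MeasurableEquiv.funUnique (Fin 1) ℝ)
      (volume.restrict ((MeasurableEquiv.funUnique (Fin 1) ℝ) ⁻¹' Set.Ioc a b))
      (volume.restrict (Set.Ioc a b)) :=
    hmp.restrict_preimage_emb (MeasurableEquiv.measurableEmbedding _) _
  have hcomp : IntegrableOn (fun x : Fin 1 → ℝ => f (x 0)) I volume := by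
    rw [IntegrableOn, hset]
    exact ((hmp2.integrable_comp_emb (MeasurableEquiv.measurableEmbedding _)).2 hIoc)
  have hbox := hcomp.hasBoxIntegral BoxIntegral.IntegrationParams.Henstock rfl
  have hint : (∫ x in (I : Set (Fin 1 → ℝ)), f (x 0)) = ∫ x in Set.Icc a b, f x := by
    rw [hset, MeasureTheory.integral_Icc_eq_integral_Ioc, ← hmp2.integral_comp
      (MeasurableEquiv.measurableEmbedding _)]
    rfl
  rw [← hint]
  exact hbox
end
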